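/- Let γ ∈ ℝ and δ > 0. For w ∈ ℝ³∖{0} define M_δ(w) := e^{−δ|w|²/2} (δ + |w|²)^{(γ+2)/4} ( Id − (1 − √δ/√(δ + |w|²)) · (w⊗w)/|w|² ). Then M_δ(w) is a symmetric positive definite 3×3 matrix and M_δ(w)² = N_δ(w), where N_δ(w) := e^{−δ|w|²} (δ + |w|²)^{1+γ/2} ( Id − w⊗w/(δ + |w|²) ). That is, M_δ is the square root of N_δ in the sense of positive definite symmetric matrices. -/

import Mathlib

open MeasureTheory Real

noncomputable section

abbrev E3 : Type := EuclideanSpace ℝ (Fin 3)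

/-- The regularized Landau kernel
`N_δ(w) = e^{-δ|w|²} (δ+|w|²)^{1+γ/2} ( Id - w⊗w/(δ+|w|²) )`. -/
def Nδker (γ δ : ℝ) (w : E3) : Matrix (Fin 3) (Fin 3) ℝ :=
  Matrix.of fun i j =>
    Real.exp (-δ * ‖w‖ ^ 2) * ((δ + ‖w‖ ^ 2) ^ (1 + γ / 2) *
      ((if i = j then (1 : ℝ) else 0) - w i * w j / (δ + ‖w‖ ^ 2)))

/-- `M_δ(w) = e^{-δ|w|²/2} (δ+|w|²)^{(γ+2)/4} ( Id - (1 - √δ/√(δ+|w|²)) w⊗w/|w|² )`. -/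
def Mδker (γ δ : ℝ) (w : E3) : Matrix (Fin 3) (Fin 3) ℝ :=
  Matrix.of fun i j =>
    Real.exp (-δ * ‖w‖ ^ 2 / 2) * ((δ + ‖w‖ ^ 2) ^ ((γ + 2) / 4) *
      ((if i = j then (1 : ℝ) else 0) -
        (1 - Real.sqrt δ / Real.sqrt (δ + ‖w‖ ^ 2)) * (w i * w j) / ‖w‖ ^ 2))

/-- Key scalar sum identity for the square of `Id - t·(v⊗v)/s`. -/
lemma key_sum (t s : ℝ) (v : Fin 3 → ℝ) (hs : s ≠ 0)
    (hv : v 0 ^ 2 + v 1 ^ 2 + v 2 ^ 2 = s) (i j : Fin 3) :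
    (∑ k : Fin 3, ((if i = k then (1:ℝ) else 0) - t * (v i * v k) / s) *
        ((if k = j then (1:ℝ) else 0) - t * (v k * v j) / s)) =
      (if i = j then (1:ℝ) else 0) - (2 * t - t ^ 2) * (v i * v j) / s := by
  have hv' : (∑ k : Fin 3, v k ^ 2) = s := by rw [Fin.sum_univ_three]; exact hv
  have step : ∀ k : Fin 3,
      ((if i = k then (1:ℝ) else 0) - t * (v i * v k) / s) *
        ((if k = j then (1:ℝ) else 0) - t * (v k * v j) / s)
      = ((if i = k then (1:ℝ) else 0) * (if k = j then (1:ℝ) else 0)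
          - (if i = k then (1:ℝ) else 0) * (t * (v k * v j) / s))
        - ((t * (v i * v k) / s) * (if k = j then (1:ℝ) else 0)
          - (t * v i / s) * (t * v j / s) * v k ^ 2) := by
    intro k; ring
  rw [Finset.sum_congr rfl fun k _ => step k, Finset.sum_sub_distrib,
    Finset.sum_sub_distrib, Finset.sum_sub_distrib, ← Finset.mul_sum, hv']
  have e1 : (∑ k : Fin 3, (if i = k then (1:ℝ) else 0) * (if k = j then (1:ℝ) else 0))
      = if i = j then (1:ℝ) else 0 := by
    simp [ite_mul, Finset.sum_ite_eq]
  have e2 : (∑ k : Fin 3, (if i = k then (1:ℝ) else 0) * (t * (v k * v j) / s))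
      = t * (v i * v j) / s := by
    simp [ite_mul, Finset.sum_ite_eq]
  have e3 : (∑ k : Fin 3, (t * (v i * v k) / s) * (if k = j then (1:ℝ) else 0))
      = t * (v i * v j) / s := by
    simp [mul_ite, Finset.sum_ite_eq']
  rw [e1, e2, e3]
  field_simp
  ring


lemma quad_form (c t s : ℝ) (hs : s ≠ 0) (v x : Fin 3 → ℝ)
    (M : Matrix (Fin 3) (Fin 3) ℝ)
    (hM : ∀ i j, M i j = c * ((if i = j then (1:ℝ) else 0) - t * (v i * v j) / s)) :
    dotProduct (star x) (M.mulVec x) =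
      c * ((x 0 ^ 2 + x 1 ^ 2 + x 2 ^ 2) -
        t * (v 0 * x 0 + v 1 * x 1 + v 2 * x 2) ^ 2 / s) := by
  simp only [dotProduct, Matrix.mulVec, Fin.sum_univ_three, hM,
    star_trivial, Pi.star_apply]
  simp only [show ((0:Fin 3) = 0) = True by simp, show ((1:Fin 3) = 1) = True by simp,
    show ((2:Fin 3) = 2) = True by simp,
    show ((0:Fin 3) = 1) = False by simp, show ((0:Fin 3) = 2) = False by simp,
    show ((1:Fin 3) = 0) = False by simp, show ((1:Fin 3) = 2) = False by simp,
    show ((2:Fin 3) = 0) = False by simp, show ((2:Fin 3) = 1) = False by simp,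
    if_false, if_true]
  field_simp
  ring

lemma aux_pos (c t s X p : ℝ) (hspos : 0 < s) (ht0 : 0 ≤ t) (ht1 : t < 1)
    (hcpos : 0 < c) (hXpos : 0 < X) (hCS : p ^ 2 ≤ s * X) :
    0 < c * (X - t * p ^ 2 / s) := by
  have e : t * p ^ 2 / s ≤ t * X := by
    rw [div_le_iff₀ hspos]
    nlinarith
  have h2 : 0 < X - t * p ^ 2 / s := by nlinarith
  exact mul_pos hcpos h2

/-- `M_δ(w)` is symmetric positive definite and `M_δ(w)² = N_δ(w)`,
i.e. `M_δ` is the positive square root of the regularized Landau kernel `N_δ`. -/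
theorem statement13 (γ δ : ℝ) (hδ : 0 < δ) (w : E3) (hw : w ≠ 0) :
    (Mδker γ δ w).IsSymm ∧ (Mδker γ δ w).PosDef ∧
      Mδker γ δ w * Mδker γ δ w = Nδker γ δ w := by
  obtain ⟨s, hsdef⟩ : ∃ s : ℝ, ‖w‖ ^ 2 = s := ⟨_, rfl⟩
  have hwpos : 0 < ‖w‖ := norm_pos_iff.mpr hw
  have hspos : 0 < s := hsdef ▸ (by positivity)
  have hs : s ≠ 0 := ne_of_gt hspos
  have hds : 0 < δ + s := by linarith
  have hnorm : w 0 ^ 2 + w 1 ^ 2 + w 2 ^ 2 = s := by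
    rw [← hsdef, EuclideanSpace.norm_eq, Real.sq_sqrt (by positivity)]
    simp [Fin.sum_univ_three, Real.norm_eq_abs, sq_abs]
  obtain ⟨t, htdef⟩ : ∃ t : ℝ, 1 - Real.sqrt δ / Real.sqrt (δ + s) = t := ⟨_, rfl⟩
  obtain ⟨c, hcdef⟩ : ∃ c : ℝ,
      Real.exp (-δ * s / 2) * (δ + s) ^ ((γ + 2) / 4) = c := ⟨_, rfl⟩
  have hcpos : 0 < c := by
    rw [← hcdef]
    have := Real.rpow_pos_of_pos hds ((γ + 2) / 4)
    positivity
  have hsqrt_pos : 0 < Real.sqrt (δ + s) := Real.sqrt_pos.mpr hds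
  have ht0 : 0 ≤ t := by
    have h1 : Real.sqrt δ ≤ Real.sqrt (δ + s) := Real.sqrt_le_sqrt (by linarith)
    have := div_le_one_of_le₀ h1 (le_of_lt hsqrt_pos)
    rw [← htdef]; linarith
  have ht1 : t < 1 := by
    have h1 : 0 < Real.sqrt δ / Real.sqrt (δ + s) :=
      div_pos (Real.sqrt_pos.mpr hδ) hsqrt_pos
    rw [← htdef]; linarith
  have hu : (Real.sqrt δ / Real.sqrt (δ + s)) ^ 2 = δ / (δ + s) := by
    rw [div_pow, Real.sq_sqrt hδ.le, Real.sq_sqrt hds.le]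
  have htsq : 2 * t - t ^ 2 = s / (δ + s) := by
    have h2 : 2 * t - t ^ 2 = 1 - (Real.sqrt δ / Real.sqrt (δ + s)) ^ 2 := by
      rw [← htdef]; ring
    rw [h2, hu]; field_simp; ring
  have hMentry : ∀ i j, Mδker γ δ w i j =
      c * ((if i = j then (1:ℝ) else 0) - t * (w i * w j) / s) := by
    intro i j
    simp only [Mδker, Matrix.of_apply]
    rw [hsdef, htdef, ← hcdef]
    ring
  have hsym : (Mδker γ δ w).IsSymm := by
    ext i j
    rw [Matrix.transpose_apply, hMentry, hMentry]
    by_cases h : i = j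
    · subst h; rfl
    · rw [if_neg h, if_neg (Ne.symm h)]; ring
  refine ⟨hsym, Matrix.posDef_iff_dotProduct_mulVec.mpr ⟨hsym, ?_⟩, ?_⟩
  · intro x hx
    rw [quad_form c t s hs (fun i => w i) x _ hMentry]
    obtain ⟨X, hXdef⟩ : ∃ X : ℝ, x 0 ^ 2 + x 1 ^ 2 + x 2 ^ 2 = X := ⟨_, rfl⟩
    obtain ⟨p, hpdef⟩ : ∃ p : ℝ, w 0 * x 0 + w 1 * x 1 + w 2 * x 2 = p := ⟨_, rfl⟩
    rw [hXdef, hpdef]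
    have hXpos : 0 < X := by
      obtain ⟨i, hi⟩ := Function.ne_iff.mp hx
      have h1 : x i ^ 2 ≤ ∑ k : Fin 3, x k ^ 2 :=
        Finset.single_le_sum (f := fun k => x k ^ 2) (fun k _ => sq_nonneg (x k))
          (Finset.mem_univ i)
      have h2 : (∑ k : Fin 3, x k ^ 2) = X := by rw [Fin.sum_univ_three]; exact hXdef
      have h3 : 0 < x i ^ 2 := sq_pos_of_ne_zero hi
      linarith [h2 ▸ h1]
    have hCS : p ^ 2 ≤ s * X := by
      rw [← hXdef, ← hpdef]
      nlinarith [sq_nonneg (w 0 * x 1 - w 1 * x 0), sq_nonneg (w 0 * x 2 - w 2 * x 0),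
        sq_nonneg (w 1 * x 2 - w 2 * x 1), hnorm]
    exact aux_pos c t s X p hspos ht0 ht1 hcpos hXpos hCS
  · ext i j
    have hk := key_sum t s (fun i => w i) hs hnorm i j
    calc (Mδker γ δ w * Mδker γ δ w) i j
        = ∑ k : Fin 3, (c * ((if i = k then (1:ℝ) else 0) - t * (w i * w k) / s)) *
            (c * ((if k = j then (1:ℝ) else 0) - t * (w k * w j) / s)) := by
          rw [Matrix.mul_apply]
          exact Finset.sum_congr rfl fun k _ => by rw [hMentry, hMentry]
      _ = c * c * ∑ k : Fin 3, ((if i = k then (1:ℝ) else 0) - t * (w i * w k) / s) *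
            ((if k = j then (1:ℝ) else 0) - t * (w k * w j) / s) := by
          rw [Finset.mul_sum]
          exact Finset.sum_congr rfl fun k _ => by ring
      _ = c * c * ((if i = j then (1:ℝ) else 0) - (2 * t - t ^ 2) * (w i * w j) / s) := by
          rw [hk]
      _ = Nδker γ δ w i j := by
          have hcc : c * c = Real.exp (-δ * s) * (δ + s) ^ (1 + γ / 2) := by
            rw [← hcdef, show Real.exp (-δ * s / 2) * (δ + s) ^ ((γ + 2) / 4) *
                (Real.exp (-δ * s / 2) * (δ + s) ^ ((γ + 2) / 4)) =
                (Real.exp (-δ * s / 2) * Real.exp (-δ * s / 2)) *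
                ((δ + s) ^ ((γ + 2) / 4) * (δ + s) ^ ((γ + 2) / 4)) from by ring,
              ← Real.exp_add, ← Real.rpow_add hds,
              show -δ * s / 2 + -δ * s / 2 = -δ * s from by ring,
              show (γ + 2) / 4 + (γ + 2) / 4 = 1 + γ / 2 from by ring]
          have harg : (2 * t - t ^ 2) * (w i * w j) / s = w i * w j / (δ + s) := by
            rw [htsq]; field_simp
          rw [hcc, harg]
          simp only [Nδker, Matrix.of_apply]
          rw [hsdef]
          ring
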